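/- There exist constants δ ∈ (0,1] and ε₀ > 0, independent of N and m, such that whenever 2 ≤ m ≤ N−2 and |ε| ≤ ε₀, there is exactly one collection (e_s, e(X)) with ‖e‖ ≤ δ satisfying F(e) = e. -/

import Mathlib

open Finset
open scoped symmDiff

/-- `M = {1,…,m}` viewed inside `ℤ/Nℤ`. -/
def Mset (N m : ℕ) : Finset (ZMod N) := (Finset.Icc 1 m).image (fun i : ℕ => (i : ZMod N))

/-- `∂Y`: the set of `j ∈ ℤ/Nℤ` such that exactly one of `j`, `j+1` lies in `Y`. -/
def pbdry (N : ℕ) [NeZero N] (Y : Finset (ZMod N)) : Finset (ZMod N) :=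
  Finset.univ.filter fun j => (j ∈ Y ∧ j + 1 ∉ Y) ∨ (j ∉ Y ∧ j + 1 ∈ Y)

/-- `n(X) = |∂(X Δ M)|`. -/
def nX (N m : ℕ) [NeZero N] (X : Finset (ZMod N)) : ℕ := (pbdry N (X ∆ Mset N m)).card

/-- The translate `Y + s = {i + s : i ∈ Y}`. -/
def tr (N : ℕ) (Y : Finset (ZMod N)) (s : ZMod N) : Finset (ZMod N) := Y.image (· + s)

/-- Extend a family of coefficients by setting `e(∅) := 1` and `e(M Δ (M+s)) := 0`
for `s ≠ 0`. -/
def pext (N m : ℕ) [NeZero N] (e : Finset (ZMod N) → ℝ) : Finset (ZMod N) → ℝ :=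
  fun X =>
    if X = ∅ then 1
    else if ∃ s : ZMod N, X = Mset N m ∆ tr N (Mset N m) s then 0
    else e X

/-- The sets `X` with `X:m` (i.e. `|X Δ M| = m`) and `n(X) > 2`. -/
def psector (N m : ℕ) [NeZero N] : Finset (Finset (ZMod N)) :=
  Finset.univ.filter fun X => (X ∆ Mset N m).card = m ∧ 2 < nX N m X

/-- The droplet fixed-point map `F(e_s, e(X)) = (e′_s, e′(X))`, where
`e′_s = 2ε·Σ_{j ∈ ∂(M−s)} e(M Δ (M−s) Δ {j,j+1})` and, for `X` with `X:m` and `n(X) > 2`,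
`e′(X) = −(ε/(n(X)−2))·Σ_{j ∈ ∂(X Δ M)} e(X Δ {j,j+1})
  + (1/(2(n(X)−2)))·Σ_{s} e_s·e((X+s) Δ (M+s) Δ M)`
(with the conventions `e(∅) = 1`, `e(M Δ (M+s)) = 0` for `s ≠ 0`);
all other components are set to `0`. -/
noncomputable def dropF (N m : ℕ) [NeZero N] (ε : ℝ)
    (p : (ZMod N → ℝ) × (Finset (ZMod N) → ℝ)) :
    (ZMod N → ℝ) × (Finset (ZMod N) → ℝ) :=
  (fun s => 2 * ε * ∑ j ∈ pbdry N (tr N (Mset N m) (-s)),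
      pext N m p.2 (Mset N m ∆ tr N (Mset N m) (-s) ∆ {j, j + 1}),
    fun X =>
      if (X ∆ Mset N m).card = m ∧ 2 < nX N m X then
        -(ε / ((nX N m X : ℝ) - 2)) *
            ∑ j ∈ pbdry N (X ∆ Mset N m), pext N m p.2 (X ∆ {j, j + 1})
          + (1 / (2 * ((nX N m X : ℝ) - 2))) *
              ∑ s : ZMod N, p.1 s * pext N m p.2 (tr N X s ∆ tr N (Mset N m) s ∆ Mset N m)
      else 0)

/-- The norm `‖e‖ = Σ_s |e_s| + 2·Σ_{X:m, n(X)>2} (n(X)−2)·|e(X)|`. -/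
def pnorm (N m : ℕ) [NeZero N] (p : (ZMod N → ℝ) × (Finset (ZMod N) → ℝ)) : ℝ :=
  ∑ s : ZMod N, |p.1 s|
    + 2 * ∑ X ∈ psector N m, ((nX N m X : ℝ) - 2) * |p.2 X|

/-!
The map `F` is a contraction of the ball `‖e‖ ≤ 1/4` once `|ε| ≤ 1/100`: its linear part has
norm `O(|ε|)` and its quadratic part is Lipschitz with constant `(‖p‖ + ‖q‖)/2`, so Banach's
fixed point theorem applies (`‖·‖` is only a seminorm, but it dominates the sup norm on the values
of `F`, which vanish off the sets `X:m` with `n(X) > 2`).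

All constants are independent of `N` and `m` because the weights `n(X) - 2` absorb every
multiplicity:
* a set `X:m` with `n(X) ≤ 2` has `X Δ M` a translate of `M`, so `e(X)` is one of the imposed
  values `e(∅) = 1`, `e(M Δ (M+s)) = 0`;
* the number of translations carrying a set onto `X Δ M` is at most the number `n(X)/2` of its
  runs, and `n(X)/2 ≤ n(X) - 2`;
* toggling the bond `{j, j+1}` at a boundary point `j` is an involution on the pairs `(X, j)`
  with `j ∈ ∂(X Δ M)`, so the hopping terms cost at most `n(X) ≤ 3 (n(X) - 2)`.
-/

lemma card_symmDiff_pair {α : Type*} [DecidableEq α] {A : Finset α} {a b : α} (ha : a ∈ A)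
    (hb : b ∉ A) : #(A ∆ {a, b}) = #A := by
  have hab : a ≠ b := fun h => hb (h ▸ ha)
  have : A ∆ {a, b} = insert b (A.erase a) := by
    ext x
    by_cases hxa : x = a <;> by_cases hxb : x = b <;> simp_all [mem_symmDiff]
  rw [this, card_insert_of_notMem (by simp [hb]), card_erase_add_one ha]

section Translation

variable {N : ℕ}

lemma mem_tr {Y : Finset (ZMod N)} {s x : ZMod N} : x ∈ tr N Y s ↔ x - s ∈ Y := by
  simp [tr, sub_eq_add_neg]

lemma card_tr (Y : Finset (ZMod N)) (s : ZMod N) : #(tr N Y s) = #Y :=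
  card_image_of_injective _ (add_left_injective s)

lemma tr_symmDiff (A B : Finset (ZMod N)) (s : ZMod N) :
    tr N (A ∆ B) s = tr N A s ∆ tr N B s :=
  image_symmDiff _ _ (add_left_injective s)

lemma tr_injective (s : ZMod N) : Function.Injective fun Y => tr N Y s :=
  image_injective (add_left_injective s)

lemma tr_tr (Y : Finset (ZMod N)) (a b : ZMod N) : tr N (tr N Y a) b = tr N Y (a + b) := by
  ext x; simp only [mem_tr, sub_sub, add_comm b]

lemma tr_pair (j s : ZMod N) : tr N {j, j + 1} s = {j + s, j + s + 1} := by
  simp [tr, add_right_comm]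

lemma tr_symmDiff_tr_Mset_symmDiff {m : ℕ} (X : Finset (ZMod N)) (s : ZMod N) :
    (tr N X s ∆ tr N (Mset N m) s ∆ Mset N m) ∆ Mset N m = tr N (X ∆ Mset N m) s := by
  rw [symmDiff_symmDiff_cancel_right, tr_symmDiff]

end Translation

section Boundary

variable {N : ℕ} [NeZero N]

lemma mem_pbdry {Y : Finset (ZMod N)} {j : ZMod N} :
    j ∈ pbdry N Y ↔ (j ∈ Y ∧ j + 1 ∉ Y) ∨ (j ∉ Y ∧ j + 1 ∈ Y) := by
  simp [pbdry]

lemma pbdry_tr (Y : Finset (ZMod N)) (s : ZMod N) :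
    pbdry N (tr N Y s) = tr N (pbdry N Y) s := by
  ext j
  simp only [mem_pbdry, mem_tr, add_sub_right_comm]

lemma card_symmDiff_pair_of_mem_pbdry {A : Finset (ZMod N)} {j : ZMod N} (hj : j ∈ pbdry N A) :
    #(A ∆ {j, j + 1}) = #A := by
  rcases mem_pbdry.1 hj with ⟨h₁, h₂⟩ | ⟨h₁, h₂⟩
  · exact card_symmDiff_pair h₁ h₂
  · rw [pair_comm]; exact card_symmDiff_pair h₂ h₁

lemma mem_pbdry_symmDiff_pair {A : Finset (ZMod N)} {j : ZMod N} :
    j ∈ pbdry N (A ∆ {j, j + 1}) ↔ j ∈ pbdry N A := by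
  simp only [mem_pbdry, mem_symmDiff, mem_insert, mem_singleton, true_or, or_true, not_true,
    true_and]
  tauto

end Boundary

section RightEnds

variable {N : ℕ}

def rightEnds (Z : Finset (ZMod N)) : Finset (ZMod N) := Z.filter fun j => j + 1 ∉ Z

lemma mem_rightEnds {Z : Finset (ZMod N)} {j : ZMod N} :
    j ∈ rightEnds Z ↔ j ∈ Z ∧ j + 1 ∉ Z := mem_filter

lemma rightEnds_tr (Z : Finset (ZMod N)) (s : ZMod N) :
    rightEnds (tr N Z s) = tr N (rightEnds Z) s := by
  ext j
  simp only [mem_rightEnds, mem_tr, add_sub_right_comm]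

-- Runs have as many left ends as right ends: count `Z` and its translate `Z - 1` by `j + 1 ∈ Z`.
lemma two_mul_card_rightEnds [NeZero N] (Z : Finset (ZMod N)) :
    2 * #(rightEnds Z) = #(pbdry N Z) := by
  set L := (tr N Z (-1)).filter (· ∉ Z)
  have hsplit : pbdry N Z = rightEnds Z ∪ L := by
    ext j
    simp [L, mem_pbdry, mem_rightEnds, mem_tr, and_comm]
  have hdisj : Disjoint (rightEnds Z) L := by
    simp only [L, disjoint_left, mem_rightEnds, mem_filter]
    tauto
  have hZ := card_filter_add_card_filter_not (s := Z) (fun j => j + 1 ∈ Z)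
  have hZ' := card_filter_add_card_filter_not (s := tr N Z (-1)) (· ∈ Z)
  have hboth : (tr N Z (-1)).filter (· ∈ Z) = Z.filter (fun j => j + 1 ∈ Z) := by
    ext j
    simp only [mem_filter, mem_tr, sub_neg_eq_add]
    tauto
  rw [hboth, card_tr] at hZ'
  rw [hsplit, card_union_of_disjoint hdisj]
  change _ + #L = #Z at hZ'
  change _ + #(rightEnds Z) = #Z at hZ
  omega

lemma rightEnds_nonempty [NeZero N] {Z : Finset (ZMod N)} (hZ : Z.Nonempty) (hZN : #Z < N) :
    (rightEnds Z).Nonempty := by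
  by_contra hR
  obtain ⟨a, ha⟩ := hZ
  have hsucc : ∀ j ∈ Z, j + 1 ∈ Z := fun j hj => by
    by_contra hj1
    exact hR ⟨j, mem_rightEnds.2 ⟨hj, hj1⟩⟩
  have hall : ∀ k : ℕ, a + k ∈ Z := by
    intro k
    induction k with
    | zero => simpa using ha
    | succ k ih => simpa [add_assoc] using hsucc _ ih
  have : univ ⊆ Z := fun b _ => by simpa using hall (b - a).val
  simpa using (card_le_card this).trans_lt hZN

-- If `C + s₀ = Z`, then `s ↦ x₀ + (s - s₀)` injects the translations carrying `C` onto `Z`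
-- into the right ends of `Z`, since these are invariant under the symmetries of `Z`.
lemma card_filter_tr_eq_le [NeZero N] (C : Finset (ZMod N)) {Z : Finset (ZMod N)} (hZ : Z.Nonempty)
    (hZN : #Z < N) : #{s | tr N C s = Z} ≤ #(rightEnds Z) := by
  rcases (univ.filter fun s => tr N C s = Z).eq_empty_or_nonempty with h | ⟨s₀, hs₀⟩
  · simp [h]
  obtain ⟨x₀, hx₀⟩ := rightEnds_nonempty hZ hZN
  rw [mem_filter] at hs₀
  refine card_le_card_of_injOn (fun s => x₀ + (s - s₀)) (fun s hs => ?_)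
    (fun s _ s' _ h => by simpa using h)
  replace hs := (mem_filter.1 (mem_coe.1 hs)).2
  have hZZ : tr N Z (s - s₀) = Z := by
    conv_lhs => rw [← hs₀.2, tr_tr, add_sub_cancel, hs]
  rw [mem_coe, ← hZZ, rightEnds_tr, mem_tr, add_sub_cancel_right]
  exact hx₀

lemma add_natCast_injOn_Iio (z : ZMod N) : Set.InjOn (fun i : ℕ => z + i) (Set.Iio N) := by
  intro a ha b hb h
  have := congrArg ZMod.val (add_left_cancel h)
  rwa [ZMod.val_cast_of_lt ha, ZMod.val_cast_of_lt hb] at this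

-- Walking forward from `z ∈ Z` one stays in `Z` until the unique right end `f`.
lemma eq_tr_Mset_of_rightEnds_subset [NeZero N] {m : ℕ} {Z : Finset (ZMod N)} {f : ZMod N}
    (hR : rightEnds Z ⊆ {f}) (hZ : #Z = m) : Z = tr N (Mset N m) (f - m) := by
  have hsucc : ∀ j ∈ Z, j ≠ f → j + 1 ∈ Z := fun j hj hjf => by
    by_contra hj1
    exact hjf (mem_singleton.1 (hR (mem_rightEnds.2 ⟨hj, hj1⟩)))
  have hrun : ∀ z ∈ Z, ∀ i ≤ (f - z).val, z + i ∈ Z := by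
    intro z hz i
    induction i with
    | zero => simpa using hz
    | succ i ih =>
      intro hi
      have hne : z + i ≠ f := by
        intro h
        have := congrArg ZMod.val (eq_sub_of_add_eq' h)
        rw [ZMod.val_cast_of_lt (by have := ZMod.val_lt (f - z); omega)] at this
        omega
      simpa [add_assoc] using hsucc _ (ih (by omega)) hne
  have hlt : ∀ z ∈ Z, (f - z).val < m := by
    intro z hz
    have hsub : (range ((f - z).val + 1)).image (fun i : ℕ => z + i) ⊆ Z := by
      intro x hx
      obtain ⟨i, hi, rfl⟩ := mem_image.1 hx
      exact hrun z hz i (by simpa [Nat.lt_succ_iff] using hi)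
    have := card_le_card hsub
    rw [card_image_of_injOn ((add_natCast_injOn_Iio z).mono fun i hi => by
      have := ZMod.val_lt (f - z); simp at hi ⊢; omega), card_range] at this
    omega
  have hsub : Z ⊆ (Icc 1 m).image (fun i : ℕ => (i : ZMod N) + (f - m)) := by
    intro z hz
    refine mem_image.2 ⟨m - (f - z).val, mem_Icc.2 ⟨by have := hlt z hz; omega, by omega⟩, ?_⟩
    rw [Nat.cast_sub (hlt z hz).le, ZMod.natCast_zmod_val]
    ring
  have heq := eq_of_subset_of_card_le hsub (card_image_le.trans (by simp [hZ]))
  rw [heq, Mset, tr, image_image]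
  rfl

end RightEnds

section Sector

variable {N m : ℕ}

lemma pbdry_Mset_subset [NeZero N] : pbdry N (Mset N m) ⊆ {0, (m : ZMod N)} := by
  intro j hj
  simp only [mem_insert, mem_singleton]
  rcases mem_pbdry.1 hj with ⟨hj, hj1⟩ | ⟨hj, hj1⟩
  · obtain ⟨i, hi, rfl⟩ := mem_image.1 hj
    rw [mem_Icc] at hi
    have him : i = m := by
      by_contra h
      exact hj1 (mem_image.2 ⟨i + 1, mem_Icc.2 ⟨by omega, by omega⟩, by push_cast; rfl⟩)
    exact .inr (by rw [him])
  · obtain ⟨i, hi, hij⟩ := mem_image.1 hj1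
    rw [mem_Icc] at hi
    refine .inl ?_
    obtain ⟨k, rfl⟩ : ∃ k, i = k + 1 := ⟨i - 1, by omega⟩
    have hk : k = 0 := by
      by_contra h
      push_cast at hij
      exact hj (mem_image.2 ⟨k, mem_Icc.2 ⟨by omega, by omega⟩, add_right_cancel hij⟩)
    push_cast [hk] at hij
    simpa using hij.symm

lemma card_pbdry_Mset_le [NeZero N] : #(pbdry N (Mset N m)) ≤ 2 :=
  (card_le_card pbdry_Mset_subset).trans (card_insert_le _ _)

lemma card_Mset (hmN : m < N) : #(Mset N m) = m := by
  rw [Mset, card_image_of_injOn, Nat.card_Icc, Nat.add_sub_cancel]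
  intro a ha b hb h
  have := congrArg ZMod.val h
  simp only [coe_Icc, Set.mem_Icc] at ha hb
  rwa [ZMod.val_cast_of_lt (by omega), ZMod.val_cast_of_lt (by omega)] at this

lemma exists_eq_tr_Mset [NeZero N] (hm : 0 < m) (hmN : m < N) {Z : Finset (ZMod N)}
    (hZ : #Z = m) (hZb : #(pbdry N Z) ≤ 2) : ∃ s, Z = tr N (Mset N m) s := by
  obtain ⟨f, hf⟩ := rightEnds_nonempty (card_pos.1 (hZ ▸ hm)) (hZ ▸ hmN)
  have hR : #(rightEnds Z) ≤ 1 := by have := two_mul_card_rightEnds Z; omega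
  exact ⟨_, eq_tr_Mset_of_rightEnds_subset (fun j hj => mem_singleton.2
    (card_le_one.1 hR j hj f hf)) hZ⟩

end Sector

section Extension

variable {N m : ℕ} [NeZero N]

def msector (N m : ℕ) [NeZero N] : Finset (Finset (ZMod N)) :=
  univ.filter fun X => #(X ∆ Mset N m) = m

lemma mem_msector {X : Finset (ZMod N)} : X ∈ msector N m ↔ #(X ∆ Mset N m) = m := by
  simp [msector]

lemma psector_eq_filter : psector N m = (msector N m).filter fun X => 2 < nX N m X := by
  rw [msector, filter_filter]; rfl

lemma mem_psector {X : Finset (ZMod N)} :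
    X ∈ psector N m ↔ X ∈ msector N m ∧ 2 < nX N m X := by
  rw [psector_eq_filter, mem_filter]

lemma one_le_nX_sub_two {X : Finset (ZMod N)} (hX : X ∈ psector N m) :
    (1 : ℝ) ≤ nX N m X - 2 := by
  have : 3 ≤ nX N m X := (mem_psector.1 hX).2
  have : (3 : ℝ) ≤ nX N m X := by exact_mod_cast this
  linarith

-- `n(Y) = 2 #(rightEnds (Y Δ M))` is even, so `n(Y) > 2` forces `n(Y) ≥ 4`.
lemma card_rightEnds_le_nX_sub_two {Y : Finset (ZMod N)} (hY : Y ∈ psector N m) :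
    (#(rightEnds (Y ∆ Mset N m)) : ℝ) ≤ nX N m Y - 2 := by
  have h2 := two_mul_card_rightEnds (Y ∆ Mset N m)
  have hn : 2 < nX N m Y := (mem_psector.1 hY).2
  unfold nX at hn ⊢
  have : #(rightEnds (Y ∆ Mset N m)) + 2 ≤ #(pbdry N (Y ∆ Mset N m)) := by omega
  have : (#(rightEnds (Y ∆ Mset N m)) : ℝ) + 2 ≤ #(pbdry N (Y ∆ Mset N m)) := by
    exact_mod_cast this
  linarith

lemma empty_mem_msector (hmN : m < N) : ∅ ∈ msector N m := by
  rw [mem_msector, ← bot_eq_empty, bot_symmDiff, card_Mset hmN]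

lemma nX_empty_le : nX N m ∅ ≤ 2 := by
  rw [nX, ← bot_eq_empty, bot_symmDiff]
  exact card_pbdry_Mset_le

lemma nX_symmDiff_tr_Mset_le (s : ZMod N) : nX N m (Mset N m ∆ tr N (Mset N m) s) ≤ 2 := by
  rw [nX, symmDiff_symmDiff_self', pbdry_tr, card_tr]
  exact card_pbdry_Mset_le

-- For `Y:m`, `n(Y) ≤ 2` means that `Y Δ M` is a single droplet `M + s`, i.e. `Y = M Δ (M + s)`.
lemma pext_of_mem_msector (hm : 0 < m) (hmN : m < N) (e : Finset (ZMod N) → ℝ)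
    {Y : Finset (ZMod N)} (hY : Y ∈ msector N m) :
    pext N m e Y = if Y ∈ psector N m then e Y else if Y = ∅ then 1 else 0 := by
  by_cases hYp : Y ∈ psector N m
  · have hn := (mem_psector.1 hYp).2
    have hne : Y ≠ ∅ := by rintro rfl; exact absurd hn (not_lt.2 nX_empty_le)
    have hnd : ¬ ∃ s, Y = Mset N m ∆ tr N (Mset N m) s := by
      rintro ⟨s, rfl⟩; exact absurd hn (not_lt.2 (nX_symmDiff_tr_Mset_le s))
    rw [pext, if_pos hYp, if_neg hne, if_neg hnd]
  · have hb : #(pbdry N (Y ∆ Mset N m)) ≤ 2 :=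
      not_lt.1 fun h => hYp (mem_psector.2 ⟨hY, h⟩)
    obtain ⟨s, hs⟩ := exists_eq_tr_Mset hm hmN (mem_msector.1 hY) hb
    have hd : ∃ s, Y = Mset N m ∆ tr N (Mset N m) s :=
      ⟨s, by rw [← hs, symmDiff_comm, symmDiff_symmDiff_cancel_right]⟩
    rw [pext, if_neg hYp]
    split_ifs <;> rfl

lemma pext_sub_pext (hm : 0 < m) (hmN : m < N) (u v : Finset (ZMod N) → ℝ)
    {Y : Finset (ZMod N)} (hY : Y ∈ msector N m) :
    pext N m u Y - pext N m v Y = if Y ∈ psector N m then u Y - v Y else 0 := by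
  rw [pext_of_mem_msector hm hmN u hY, pext_of_mem_msector hm hmN v hY]
  split_ifs <;> ring

lemma pext_zero (Y : Finset (ZMod N)) : pext N m 0 Y = if Y = ∅ then 1 else 0 := by
  unfold pext
  split_ifs <;> rfl

lemma sum_msector_abs_pext_sub (hm : 0 < m) (hmN : m < N) (c : Finset (ZMod N) → ℝ)
    (u v : Finset (ZMod N) → ℝ) :
    ∑ Y ∈ msector N m, c Y * |pext N m u Y - pext N m v Y|
      = ∑ Y ∈ psector N m, c Y * |u Y - v Y| := by
  rw [psector_eq_filter, sum_filter]
  refine sum_congr rfl fun Y hY => ?_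
  simp only [pext_sub_pext hm hmN u v hY, mem_psector, hY, true_and]
  split_ifs <;> simp

lemma sum_msector_abs_pext_zero (hmN : m < N) (c : Finset (ZMod N) → ℝ) :
    ∑ Y ∈ msector N m, c Y * |pext N m 0 Y| = c ∅ := by
  simp_rw [pext_zero, apply_ite abs, abs_one, abs_zero, mul_ite, mul_one, mul_zero]
  rw [sum_ite_eq' _ _ c, if_pos (empty_mem_msector hmN)]

end Extension

section Counting

variable {N m : ℕ} [NeZero N]

/-- Toggling the bond `{j, j + 1}` at a boundary point `j` of `X Δ M` is an involution of the
pairs `(X, j)` with `X:m` and `j ∈ ∂(X Δ M)`. -/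
lemma sum_sum_pbdry_toggle (h : Finset (ZMod N) → ℝ) :
    ∑ X ∈ msector N m, ∑ j ∈ pbdry N (X ∆ Mset N m), h (X ∆ {j, j + 1})
      = ∑ Y ∈ msector N m, nX N m Y * h Y := by
  let toggle : (_ : Finset (ZMod N)) × ZMod N → (_ : Finset (ZMod N)) × ZMod N :=
    fun x => ⟨x.1 ∆ {x.2, x.2 + 1}, x.2⟩
  have hmaps : ∀ x ∈ (msector N m).sigma fun X => pbdry N (X ∆ Mset N m),
      toggle x ∈ (msector N m).sigma fun X => pbdry N (X ∆ Mset N m) := by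
    rintro ⟨X, j⟩ hx
    simp only [mem_sigma, mem_msector] at hx ⊢
    rw [symmDiff_right_comm, card_symmDiff_pair_of_mem_pbdry hx.2, mem_pbdry_symmDiff_pair]
    exact hx
  have hinv : ∀ x ∈ (msector N m).sigma fun X => pbdry N (X ∆ Mset N m), toggle (toggle x) = x :=
    fun x _ => by simp [toggle, symmDiff_symmDiff_cancel_right]
  simp_rw [nX, ← nsmul_eq_mul, ← sum_const]
  rw [sum_sigma' (msector N m) (fun X => pbdry N (X ∆ Mset N m)) fun X j => h (X ∆ {j, j + 1}),
    sum_sigma' (msector N m) (fun X => pbdry N (X ∆ Mset N m)) fun Y _ => h Y]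
  exact sum_nbij' toggle toggle hmaps hmaps hinv hinv fun _ _ => rfl

lemma sum_abs_sum_pbdry_toggle_le (g : Finset (ZMod N) → ℝ) :
    ∑ X ∈ psector N m, |∑ j ∈ pbdry N (X ∆ Mset N m), g (X ∆ {j, j + 1})|
      ≤ ∑ Y ∈ msector N m, nX N m Y * |g Y| :=
  calc ∑ X ∈ psector N m, |∑ j ∈ pbdry N (X ∆ Mset N m), g (X ∆ {j, j + 1})|
      ≤ ∑ X ∈ psector N m, ∑ j ∈ pbdry N (X ∆ Mset N m), |g (X ∆ {j, j + 1})| :=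
        sum_le_sum fun _ _ => abs_sum_le_sum_abs _ _
    _ ≤ ∑ X ∈ msector N m, ∑ j ∈ pbdry N (X ∆ Mset N m), |g (X ∆ {j, j + 1})| :=
        sum_le_sum_of_subset_of_nonneg (by rw [psector_eq_filter]; exact filter_subset _ _)
          fun _ _ _ => sum_nonneg fun _ _ => abs_nonneg _
    _ = ∑ Y ∈ msector N m, nX N m Y * |g Y| := sum_sum_pbdry_toggle fun Y => |g Y|

-- Group the translations `s` by the set `M Δ (C + s)` they produce.
lemma sum_symmDiff_tr_le (hm : 0 < m) (hmN : m < N) {C : Finset (ZMod N)} (hC : #C = m)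
    {h : Finset (ZMod N) → ℝ} (h0 : ∀ Y, 0 ≤ h Y) :
    ∑ s, h (Mset N m ∆ tr N C s) ≤ ∑ Y ∈ msector N m, #(rightEnds (Y ∆ Mset N m)) * h Y := by
  have hsd : ∀ s, (Mset N m ∆ tr N C s) ∆ Mset N m = tr N C s := fun s => by
    rw [symmDiff_comm, symmDiff_symmDiff_cancel_left]
  have hmaps : ∀ s ∈ (univ : Finset (ZMod N)), Mset N m ∆ tr N C s ∈ msector N m := fun s _ => by
    rw [mem_msector, hsd, card_tr, hC]
  rw [← sum_fiberwise_of_maps_to' hmaps]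
  refine sum_le_sum fun Y hY => ?_
  rw [sum_const, nsmul_eq_mul]
  refine mul_le_mul_of_nonneg_right ?_ (h0 Y)
  have hYM : #(Y ∆ Mset N m) = m := mem_msector.1 hY
  have hfib : (univ.filter fun s => Mset N m ∆ tr N C s = Y) ⊆
      univ.filter fun s => tr N C s = Y ∆ Mset N m :=
    fun s hs => by
      simp only [mem_filter, mem_univ, true_and] at hs ⊢
      rw [← hs, hsd]
  exact_mod_cast (card_le_card hfib).trans
    (card_filter_tr_eq_le C (card_pos.1 (by omega)) (by omega))

lemma sum_abs_sum_pbdry_tr_le (hm : 0 < m) (hmN : m < N) (g : Finset (ZMod N) → ℝ) :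
    ∑ s, |∑ j ∈ pbdry N (tr N (Mset N m) (-s)), g (Mset N m ∆ tr N (Mset N m) (-s) ∆ {j, j + 1})|
      ≤ 2 * ∑ Y ∈ msector N m, #(rightEnds (Y ∆ Mset N m)) * |g Y| := by
  have hre : ∀ s, ∑ j ∈ pbdry N (tr N (Mset N m) (-s)),
      g (Mset N m ∆ tr N (Mset N m) (-s) ∆ {j, j + 1})
      = ∑ b ∈ pbdry N (Mset N m), g (Mset N m ∆ tr N (Mset N m ∆ {b, b + 1}) (-s)) := fun s => by
    rw [pbdry_tr, tr, sum_image fun _ _ _ _ => add_right_cancel]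
    simp_rw [tr_symmDiff, tr_pair, symmDiff_assoc]
  set B := ∑ Y ∈ msector N m, #(rightEnds (Y ∆ Mset N m)) * |g Y|
  have hB : ∀ b ∈ pbdry N (Mset N m),
      ∑ s, |g (Mset N m ∆ tr N (Mset N m ∆ {b, b + 1}) (-s))| ≤ B := fun b hb => by
    refine (Fintype.sum_equiv (Equiv.neg (ZMod N)) _
      (fun s => |g (Mset N m ∆ tr N (Mset N m ∆ {b, b + 1}) s)|) fun _ => rfl).trans_le ?_
    exact sum_symmDiff_tr_le hm hmN (h := fun Y => |g Y|)
      ((card_symmDiff_pair_of_mem_pbdry hb).trans (card_Mset hmN)) fun _ => abs_nonneg _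
  calc ∑ s, |∑ j ∈ pbdry N (tr N (Mset N m) (-s)), g (Mset N m ∆ tr N (Mset N m) (-s) ∆ {j, j + 1})|
      ≤ ∑ s, ∑ b ∈ pbdry N (Mset N m), |g (Mset N m ∆ tr N (Mset N m ∆ {b, b + 1}) (-s))| :=
        sum_le_sum fun s _ => hre s ▸ abs_sum_le_sum_abs _ _
    _ = ∑ b ∈ pbdry N (Mset N m), ∑ s, |g (Mset N m ∆ tr N (Mset N m ∆ {b, b + 1}) (-s))| :=
        sum_comm
    _ ≤ ∑ b ∈ pbdry N (Mset N m), B := sum_le_sum hB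
    _ ≤ 2 * B := by
        rw [sum_const, nsmul_eq_mul]
        exact mul_le_mul_of_nonneg_right (by exact_mod_cast card_pbdry_Mset_le)
          (sum_nonneg fun _ _ => mul_nonneg (Nat.cast_nonneg _) (abs_nonneg _))

end Counting

section Norm

variable {N m : ℕ} [NeZero N]

def sectorNorm (N m : ℕ) [NeZero N] (u : Finset (ZMod N) → ℝ) : ℝ :=
  ∑ X ∈ psector N m, ((nX N m X : ℝ) - 2) * |u X|

lemma pnorm_eq (p : (ZMod N → ℝ) × (Finset (ZMod N) → ℝ)) :
    pnorm N m p = ∑ s, |p.1 s| + 2 * sectorNorm N m p.2 := rfl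

lemma sectorNorm_nonneg (u : Finset (ZMod N) → ℝ) : 0 ≤ sectorNorm N m u :=
  sum_nonneg fun X hX => mul_nonneg (by linarith [one_le_nX_sub_two hX]) (abs_nonneg _)

lemma pnorm_nonneg (p : (ZMod N → ℝ) × (Finset (ZMod N) → ℝ)) : 0 ≤ pnorm N m p :=
  add_nonneg (sum_nonneg fun _ _ => abs_nonneg _) (mul_nonneg zero_le_two (sectorNorm_nonneg _))

lemma pnorm_zero : pnorm N m 0 = 0 := by
  simp [pnorm]

lemma pnorm_add_le (p q : (ZMod N → ℝ) × (Finset (ZMod N) → ℝ)) :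
    pnorm N m (p + q) ≤ pnorm N m p + pnorm N m q := by
  have h₁ : ∑ s, |p.1 s + q.1 s| ≤ ∑ s, |p.1 s| + ∑ s, |q.1 s| := by
    rw [← sum_add_distrib]; exact sum_le_sum fun _ _ => abs_add_le _ _
  have h₂ : sectorNorm N m (p.2 + q.2) ≤ sectorNorm N m p.2 + sectorNorm N m q.2 := by
    rw [sectorNorm, sectorNorm, sectorNorm, ← sum_add_distrib]
    refine sum_le_sum fun X hX => ?_
    rw [← mul_add]
    exact mul_le_mul_of_nonneg_left (abs_add_le _ _) (by linarith [one_le_nX_sub_two hX])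
  simp only [pnorm_eq, Prod.fst_add, Prod.snd_add, Pi.add_apply] at h₁ ⊢
  linarith

lemma continuous_pnorm : Continuous (pnorm N m) := by
  unfold pnorm
  fun_prop

lemma norm_le_pnorm {p : (ZMod N → ℝ) × (Finset (ZMod N) → ℝ)}
    (hp : ∀ X ∉ psector N m, p.2 X = 0) : ‖p‖ ≤ pnorm N m p := by
  have hfst : ∀ s, |p.1 s| ≤ pnorm N m p := fun s => by
    rw [pnorm_eq]
    linarith [single_le_sum (fun t _ => abs_nonneg (p.1 t)) (mem_univ s),
      sectorNorm_nonneg (N := N) (m := m) p.2]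
  have hsnd : ∀ X, |p.2 X| ≤ pnorm N m p := fun X => by
    by_cases hX : X ∈ psector N m
    · have h₁ : |p.2 X| ≤ ((nX N m X : ℝ) - 2) * |p.2 X| :=
        le_mul_of_one_le_left (abs_nonneg _) (one_le_nX_sub_two hX)
      have h₂ : ((nX N m X : ℝ) - 2) * |p.2 X| ≤ sectorNorm N m p.2 :=
        single_le_sum (f := fun X => ((nX N m X : ℝ) - 2) * |p.2 X|)
          (fun Y hY => mul_nonneg (by linarith [one_le_nX_sub_two hY]) (abs_nonneg _)) hX
      have h₃ : 0 ≤ ∑ s, |p.1 s| := sum_nonneg fun _ _ => abs_nonneg _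
      rw [pnorm_eq]
      linarith [abs_nonneg (p.2 X)]
    · rw [hp X hX, abs_zero]; exact pnorm_nonneg p
  rw [Prod.norm_def]
  exact max_le ((pi_norm_le_iff_of_nonneg (pnorm_nonneg p)).2 hfst)
    ((pi_norm_le_iff_of_nonneg (pnorm_nonneg p)).2 hsnd)

end Norm

section DropletMap

variable {N m : ℕ} [NeZero N]

lemma tr_symmDiff_tr_Mset_mem_psector {X : Finset (ZMod N)} (hX : X ∈ psector N m)
    (s : ZMod N) : tr N X s ∆ tr N (Mset N m) s ∆ Mset N m ∈ psector N m := by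
  obtain ⟨hXm, hn⟩ := mem_psector.1 hX
  refine mem_psector.2 ⟨?_, ?_⟩
  · rw [mem_msector, tr_symmDiff_tr_Mset_symmDiff, card_tr]; exact mem_msector.1 hXm
  · rwa [nX, tr_symmDiff_tr_Mset_symmDiff, pbdry_tr, card_tr]

lemma sum_abs_tr_symmDiff_tr_Mset_le (u : Finset (ZMod N) → ℝ) (s : ZMod N) :
    ∑ X ∈ psector N m, |u (tr N X s ∆ tr N (Mset N m) s ∆ Mset N m)| ≤ sectorNorm N m u := by
  have hinj : Set.InjOn (fun X => tr N X s ∆ tr N (Mset N m) s ∆ Mset N m) (psector N m) :=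
    fun X _ Y _ h => by
      have := congrArg (· ∆ Mset N m) h
      simp only [tr_symmDiff_tr_Mset_symmDiff] at this
      exact symmDiff_left_injective _ (tr_injective s this)
  rw [← sum_image (f := fun Y => |u Y|) hinj]
  refine (sum_le_sum_of_subset_of_nonneg ?_ fun _ _ _ => abs_nonneg _).trans
    (sum_le_sum fun Y hY => le_mul_of_one_le_left (abs_nonneg _) (one_le_nX_sub_two hY))
  rintro _ hY
  obtain ⟨X, hX, rfl⟩ := mem_image.1 hY
  exact tr_symmDiff_tr_Mset_mem_psector hX s

lemma snd_dropF_of_notMem {ε : ℝ} (p : (ZMod N → ℝ) × (Finset (ZMod N) → ℝ))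
    {X : Finset (ZMod N)} (hX : X ∉ psector N m) : (dropF N m ε p).2 X = 0 :=
  if_neg fun h => hX (mem_filter.2 ⟨mem_univ _, h⟩)

lemma nX_sub_two_mul_snd_dropF (hm : 0 < m) (hmN : m < N) (ε : ℝ)
    (p : (ZMod N → ℝ) × (Finset (ZMod N) → ℝ)) {X : Finset (ZMod N)} (hX : X ∈ psector N m) :
    ((nX N m X : ℝ) - 2) * (dropF N m ε p).2 X
      = -ε * ∑ j ∈ pbdry N (X ∆ Mset N m), pext N m p.2 (X ∆ {j, j + 1})
        + (1 / 2) * ∑ s, p.1 s * p.2 (tr N X s ∆ tr N (Mset N m) s ∆ Mset N m) := by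
  have hquad : ∀ s, pext N m p.2 (tr N X s ∆ tr N (Mset N m) s ∆ Mset N m)
      = p.2 (tr N X s ∆ tr N (Mset N m) s ∆ Mset N m) := fun s => by
    have hmem := tr_symmDiff_tr_Mset_mem_psector hX s
    rw [pext_of_mem_msector hm hmN _ (mem_psector.1 hmem).1, if_pos hmem]
  have hn := one_le_nX_sub_two hX
  simp only [dropF, if_pos (mem_filter.1 hX).2, hquad]
  field_simp

lemma sum_abs_fst_dropF_sub_le (hm : 0 < m) (hmN : m < N) (ε : ℝ)
    (p q : (ZMod N → ℝ) × (Finset (ZMod N) → ℝ)) :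
    ∑ s, |(dropF N m ε p).1 s - (dropF N m ε q).1 s| ≤ 4 * |ε| * sectorNorm N m (p.2 - q.2) := by
  set g : Finset (ZMod N) → ℝ := fun Y => pext N m p.2 Y - pext N m q.2 Y
  have hdiff : ∀ s, (dropF N m ε p).1 s - (dropF N m ε q).1 s = 2 * ε *
      ∑ j ∈ pbdry N (tr N (Mset N m) (-s)), g (Mset N m ∆ tr N (Mset N m) (-s) ∆ {j, j + 1}) :=
    fun s => by simp only [dropF, g, sum_sub_distrib, mul_sub]
  have hR : ∑ Y ∈ msector N m, #(rightEnds (Y ∆ Mset N m)) * |g Y|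
      ≤ sectorNorm N m (p.2 - q.2) := by
    rw [sum_msector_abs_pext_sub hm hmN]
    exact sum_le_sum fun Y hY =>
      mul_le_mul_of_nonneg_right (card_rightEnds_le_nX_sub_two hY) (abs_nonneg _)
  simp_rw [hdiff, abs_mul, abs_two, mul_assoc, ← mul_sum]
  have := sum_abs_sum_pbdry_tr_le hm hmN g
  have := mul_le_mul_of_nonneg_left hR (abs_nonneg ε)
  nlinarith [abs_nonneg ε]

lemma two_mul_nX_sub_two_mul_abs_snd_dropF_sub_le (hm : 0 < m) (hmN : m < N) (ε : ℝ)
    (p q : (ZMod N → ℝ) × (Finset (ZMod N) → ℝ)) {X : Finset (ZMod N)} (hX : X ∈ psector N m) :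
    2 * (((nX N m X : ℝ) - 2) * |(dropF N m ε p).2 X - (dropF N m ε q).2 X|)
      ≤ 2 * |ε| * |∑ j ∈ pbdry N (X ∆ Mset N m),
          (pext N m p.2 (X ∆ {j, j + 1}) - pext N m q.2 (X ∆ {j, j + 1}))|
        + ∑ s, (|p.1 s - q.1 s| * |p.2 (tr N X s ∆ tr N (Mset N m) s ∆ Mset N m)|
          + |q.1 s| * |(p.2 - q.2) (tr N X s ∆ tr N (Mset N m) s ∆ Mset N m)|) := by
  set Y : ZMod N → Finset (ZMod N) := fun s => tr N X s ∆ tr N (Mset N m) s ∆ Mset N m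
  set L : ℝ := ∑ j ∈ pbdry N (X ∆ Mset N m),
    (pext N m p.2 (X ∆ {j, j + 1}) - pext N m q.2 (X ∆ {j, j + 1}))
  have hn : 0 ≤ (nX N m X : ℝ) - 2 := by linarith [one_le_nX_sub_two hX]
  have hquad : |∑ s, (p.1 s * p.2 (Y s) - q.1 s * q.2 (Y s))|
      ≤ ∑ s, (|p.1 s - q.1 s| * |p.2 (Y s)| + |q.1 s| * |(p.2 - q.2) (Y s)|) := by
    refine (abs_sum_le_sum_abs _ _).trans (sum_le_sum fun s _ => ?_)
    rw [← abs_mul, ← abs_mul]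
    exact (abs_add_le _ _).trans_eq' (by simp only [Pi.sub_apply]; ring_nf)
  have hdiff : 2 * (((nX N m X : ℝ) - 2) * ((dropF N m ε p).2 X - (dropF N m ε q).2 X))
      = 2 * (-ε * L) + ∑ s, (p.1 s * p.2 (Y s) - q.1 s * q.2 (Y s)) := by
    rw [mul_sub, nX_sub_two_mul_snd_dropF hm hmN ε p hX, nX_sub_two_mul_snd_dropF hm hmN ε q hX,
      sum_sub_distrib]
    simp only [L, sum_sub_distrib]
    ring
  have h2abs : ∀ a : ℝ, 2 * |a| = |2 * a| := fun a => by rw [abs_mul, abs_two]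
  rw [← abs_of_nonneg hn, ← abs_mul, h2abs, hdiff]
  refine (abs_add_le _ _).trans (add_le_add (le_of_eq ?_) hquad)
  rw [abs_mul, abs_mul, abs_neg, abs_two, mul_assoc]

lemma two_mul_sectorNorm_snd_dropF_sub_le (hm : 0 < m) (hmN : m < N) (ε : ℝ)
    (p q : (ZMod N → ℝ) × (Finset (ZMod N) → ℝ)) :
    2 * sectorNorm N m ((dropF N m ε p).2 - (dropF N m ε q).2)
      ≤ 6 * |ε| * sectorNorm N m (p.2 - q.2)
        + (∑ s, |p.1 s - q.1 s|) * sectorNorm N m p.2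
        + (∑ s, |q.1 s|) * sectorNorm N m (p.2 - q.2) := by
  have hlin : ∑ X ∈ psector N m, |∑ j ∈ pbdry N (X ∆ Mset N m),
      (pext N m p.2 (X ∆ {j, j + 1}) - pext N m q.2 (X ∆ {j, j + 1}))|
      ≤ 3 * sectorNorm N m (p.2 - q.2) := by
    refine (sum_abs_sum_pbdry_toggle_le fun Y => pext N m p.2 Y - pext N m q.2 Y).trans ?_
    rw [sum_msector_abs_pext_sub hm hmN, sectorNorm, mul_sum]
    refine sum_le_sum fun Y hY => ?_
    rw [← mul_assoc]
    exact mul_le_mul_of_nonneg_right (by linarith [one_le_nX_sub_two hY]) (abs_nonneg _)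
  have hquad : ∑ X ∈ psector N m, ∑ s,
      (|p.1 s - q.1 s| * |p.2 (tr N X s ∆ tr N (Mset N m) s ∆ Mset N m)|
        + |q.1 s| * |(p.2 - q.2) (tr N X s ∆ tr N (Mset N m) s ∆ Mset N m)|)
      ≤ (∑ s, |p.1 s - q.1 s|) * sectorNorm N m p.2
        + (∑ s, |q.1 s|) * sectorNorm N m (p.2 - q.2) := by
    rw [sum_comm, sum_mul, sum_mul, ← sum_add_distrib]
    refine sum_le_sum fun s _ => ?_
    rw [sum_add_distrib, ← mul_sum, ← mul_sum]
    exact add_le_add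
      (mul_le_mul_of_nonneg_left (sum_abs_tr_symmDiff_tr_Mset_le p.2 s) (abs_nonneg _))
      (mul_le_mul_of_nonneg_left (sum_abs_tr_symmDiff_tr_Mset_le (p.2 - q.2) s) (abs_nonneg _))
  calc 2 * sectorNorm N m ((dropF N m ε p).2 - (dropF N m ε q).2)
      = ∑ X ∈ psector N m, 2 * (((nX N m X : ℝ) - 2) *
          |(dropF N m ε p).2 X - (dropF N m ε q).2 X|) := by
        rw [sectorNorm, mul_sum]; rfl
    _ ≤ _ := sum_le_sum fun X hX => two_mul_nX_sub_two_mul_abs_snd_dropF_sub_le hm hmN ε p q hX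
    _ ≤ _ := by
        rw [sum_add_distrib, ← mul_sum]
        nlinarith [abs_nonneg ε]

lemma pnorm_dropF_sub_le (hm : 0 < m) (hmN : m < N) (ε : ℝ)
    (p q : (ZMod N → ℝ) × (Finset (ZMod N) → ℝ)) :
    pnorm N m (dropF N m ε p - dropF N m ε q)
      ≤ (5 * |ε| + (pnorm N m p + pnorm N m q) / 2) * pnorm N m (p - q) := by
  have hA := sum_abs_fst_dropF_sub_le hm hmN ε p q
  have hB := two_mul_sectorNorm_snd_dropF_sub_le hm hmN ε p q
  have hp : sectorNorm N m p.2 ≤ pnorm N m p / 2 := by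
    rw [pnorm_eq]; linarith [sum_nonneg fun s (_ : s ∈ univ) => abs_nonneg (p.1 s)]
  have hq : ∑ s, |q.1 s| ≤ pnorm N m q := by
    rw [pnorm_eq]; linarith [sectorNorm_nonneg (N := N) (m := m) q.2]
  have ha : 0 ≤ ∑ s, |p.1 s - q.1 s| := sum_nonneg fun _ _ => abs_nonneg _
  have hT := sectorNorm_nonneg (N := N) (m := m) (p.2 - q.2)
  have hFpq : pnorm N m (dropF N m ε p - dropF N m ε q) = ∑ s, |(dropF N m ε p).1 s -
      (dropF N m ε q).1 s| + 2 * sectorNorm N m ((dropF N m ε p).2 - (dropF N m ε q).2) := rfl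
  have hpq : pnorm N m (p - q) = ∑ s, |p.1 s - q.1 s| + 2 * sectorNorm N m (p.2 - q.2) := rfl
  rw [hFpq, hpq]
  nlinarith [mul_le_mul_of_nonneg_left hp ha, mul_le_mul_of_nonneg_left hq hT, abs_nonneg ε,
    pnorm_nonneg (N := N) (m := m) p, pnorm_nonneg (N := N) (m := m) q]

lemma pnorm_dropF_zero_le (hm : 0 < m) (hmN : m < N) (ε : ℝ) :
    pnorm N m (dropF N m ε 0) ≤ 8 * |ε| := by
  have hM : #(rightEnds (Mset N m)) ≤ 1 := by
    have := two_mul_card_rightEnds (Mset N m)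
    have := card_pbdry_Mset_le (N := N) (m := m)
    omega
  have hA : ∑ s, |(dropF N m ε 0).1 s| ≤ 4 * |ε| := by
    have h := sum_abs_sum_pbdry_tr_le hm hmN (pext N m 0)
    rw [sum_msector_abs_pext_zero hmN (fun Y => (#(rightEnds (Y ∆ Mset N m)) : ℝ)),
      ← bot_eq_empty, bot_symmDiff] at h
    have : (#(rightEnds (Mset N m)) : ℝ) ≤ 1 := by exact_mod_cast hM
    simp only [dropF, abs_mul, abs_two, mul_assoc, ← mul_sum, Prod.snd_zero]
    nlinarith [abs_nonneg ε]
  have hB : 2 * sectorNorm N m (dropF N m ε 0).2 ≤ 4 * |ε| := by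
    have h := sum_abs_sum_pbdry_toggle_le (N := N) (m := m) (pext N m 0)
    rw [sum_msector_abs_pext_zero hmN (fun Y => (nX N m Y : ℝ))] at h
    have h2 : (nX N m ∅ : ℝ) ≤ 2 := by exact_mod_cast nX_empty_le
    have hX : ∀ X ∈ psector N m, ((nX N m X : ℝ) - 2) * |(dropF N m ε 0).2 X|
        = |ε| * |∑ j ∈ pbdry N (X ∆ Mset N m), pext N m 0 (X ∆ {j, j + 1})| := fun X hX => by
      have hn : 0 ≤ (nX N m X : ℝ) - 2 := by linarith [one_le_nX_sub_two hX]
      rw [← abs_of_nonneg hn, ← abs_mul, nX_sub_two_mul_snd_dropF hm hmN ε 0 hX]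
      simp [abs_mul]
    rw [sectorNorm, sum_congr rfl hX, ← mul_sum]
    nlinarith [abs_nonneg ε]
  rw [pnorm_eq]
  linarith

end DropletMap

lemma continuous_dropF {N m : ℕ} [NeZero N] (ε : ℝ) : Continuous (dropF N m ε) := by
  have hpext : ∀ Y, Continuous fun e : Finset (ZMod N) → ℝ => pext N m e Y := fun Y => by
    unfold pext
    split_ifs <;> fun_prop
  unfold dropF
  refine .prodMk (continuous_pi fun s => ?_) (continuous_pi fun X => ?_)
  · exact continuous_const.mul (continuous_finsetSum _ fun j _ => (hpext _).comp continuous_snd)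
  · split_ifs
    · exact (continuous_const.mul (continuous_finsetSum _ fun j _ =>
        (hpext _).comp continuous_snd)).add (continuous_const.mul (continuous_finsetSum _
          fun s _ => ((continuous_apply s).comp continuous_fst).mul
            ((hpext _).comp continuous_snd)))
    · exact continuous_const

theorem exists_unique_fixedPoint_of_gauge {E : Type*} [NormedAddCommGroup E] [CompleteSpace E]
    {f : E → E} {ν : E → ℝ} {K δ : ℝ} (hf : Continuous f) (hν : Continuous ν)
    (hK₀ : 0 ≤ K) (hK₁ : K < 1) {x₀ : E} (hx₀ : ν x₀ ≤ δ)
    (hmaps : ∀ x, ν x ≤ δ → ν (f x) ≤ δ)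
    (hlip : ∀ x y, ν x ≤ δ → ν y ≤ δ → ν (f x - f y) ≤ K * ν (x - y))
    (hdom : ∀ x y, ‖f x - f y‖ ≤ ν (f x - f y)) :
    ∃! x, ν x ≤ δ ∧ f x = x := by
  set w : ℕ → E := fun k => f^[k] x₀
  have hw_succ : ∀ k, w (k + 1) = f (w k) := fun k => Function.iterate_succ_apply' f k x₀
  have hw : ∀ k, ν (w k) ≤ δ := fun k => by
    induction k with
    | zero => exact hx₀
    | succ k ih => rw [hw_succ]; exact hmaps _ ih
  have hstep : ∀ k, ν (w k - w (k + 1)) ≤ K ^ k * ν (w 0 - w 1) := fun k => by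
    induction k with
    | zero => simp
    | succ k ih =>
      rw [hw_succ, hw_succ (k + 1), pow_succ', mul_assoc]
      exact (hlip _ _ (hw k) (hw (k + 1))).trans (mul_le_mul_of_nonneg_left ih hK₀)
  have hcauchy : CauchySeq fun k => w (k + 1) := by
    refine cauchySeq_of_le_geometric K (K * ν (w 0 - w 1)) hK₁ fun k => ?_
    rw [dist_eq_norm, hw_succ, hw_succ (k + 1)]
    refine (hdom _ _).trans ?_
    rw [← hw_succ, ← hw_succ (k + 1), mul_comm K, mul_assoc, ← pow_succ']
    exact (hstep (k + 1)).trans_eq (mul_comm _ _)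
  obtain ⟨x, hx⟩ := cauchySeq_tendsto_of_complete hcauchy
  have hfix : f x = x := by
    refine tendsto_nhds_unique ((hf.tendsto x).comp hx) ?_
    simpa only [Function.comp_def, ← hw_succ] using hx.comp (Filter.tendsto_add_atTop_nat 1)
  have hxδ : ν x ≤ δ := le_of_tendsto' ((hν.tendsto x).comp hx) fun k => hw (k + 1)
  refine ⟨x, ⟨hxδ, hfix⟩, ?_⟩
  rintro y ⟨hy, hfy⟩
  have hlip_yx := hlip y x hy hxδ
  have hdom_yx := hdom y x
  rw [hfy, hfix] at hlip_yx hdom_yx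
  have hν0 : ν (y - x) ≤ 0 := by nlinarith
  exact sub_eq_zero.1 (norm_le_zero_iff.1 (hdom_yx.trans hν0))

theorem droplet_fixed_point_exists_unique :
    ∃ δ ε₀ : ℝ, 0 < δ ∧ δ ≤ 1 ∧ 0 < ε₀ ∧
      ∀ (N : ℕ) [NeZero N] (m : ℕ) (ε : ℝ), 4 ≤ N → 2 ≤ m → m + 2 ≤ N → |ε| ≤ ε₀ →
        ∃! p : (ZMod N → ℝ) × (Finset (ZMod N) → ℝ),
          pnorm N m p ≤ δ ∧ dropF N m ε p = p := by
  refine ⟨1 / 4, 1 / 100, by norm_num, by norm_num, by norm_num, ?_⟩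
  intro N _ m ε _ hm2 hmN hε
  have hm : 0 < m := by omega
  have hmN' : m < N := by omega
  have hlip : ∀ p q, pnorm N m p ≤ 1 / 4 → pnorm N m q ≤ 1 / 4 →
      pnorm N m (dropF N m ε p - dropF N m ε q) ≤ 3 / 10 * pnorm N m (p - q) := fun p q hp hq =>
    (pnorm_dropF_sub_le hm hmN' ε p q).trans
      (mul_le_mul_of_nonneg_right (by linarith) (pnorm_nonneg _))
  refine exists_unique_fixedPoint_of_gauge (continuous_dropF ε) continuous_pnorm (by norm_num)
    (by norm_num) (x₀ := 0) (by rw [pnorm_zero]; norm_num) (fun p hp => ?_) hlip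
    fun p q => norm_le_pnorm fun X hX => by
      simp [snd_dropF_of_notMem p hX, snd_dropF_of_notMem q hX]
  have h₁ := hlip p 0 hp (by rw [pnorm_zero]; norm_num)
  have h₂ := pnorm_add_le (N := N) (m := m) (dropF N m ε p - dropF N m ε 0) (dropF N m ε 0)
  rw [sub_zero] at h₁
  rw [sub_add_cancel] at h₂
  linarith [pnorm_dropF_zero_le hm hmN' ε]
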